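/- arXiv:1711.05445 — 5 statements merged into one kernel-verified Lean document; each statement's English description precedes it below -/
import Mathlib

section
/- Let T be a triangulated category with thick subcategories X and Y, and set U = X ∩ Y. If X * Y = T, then the pair (X/U, Y/U) is a stable t-structure in the Verdier quotient T/U. -/
open CategoryTheory Limits Pretriangulated

universe v u

variable {C : Type u} [Category.{v} C] [HasZeroObject C] [HasShift C ℤ]
  [Preadditive C] [∀ n : ℤ, (shiftFunctor C n).Additive] [Pretriangulated C]

/-- `S * T` for classes of objects of a pretriangulated category. -/
def star (S T : Set C) : Set C :=
  {E | ∃ (X Y : C) (f : X ⟶ E) (g : E ⟶ Y) (h : Y ⟶ X⟦(1 : ℤ)⟧),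
    X ∈ S ∧ Y ∈ T ∧ Triangle.mk f g h ∈ distTriang C}

/-- A pair of classes of objects of a pretriangulated category is a stable t-structure. -/
def IsStableTStructure (D : Type*) [Category D] [HasZeroObject D] [HasShift D ℤ]
    [Preadditive D] [∀ n : ℤ, (shiftFunctor D n).Additive] [Pretriangulated D]
    (U V : Set D) : Prop :=
  (∀ u ∈ U, ∀ n : ℤ, u⟦n⟧ ∈ U) ∧ (∀ v ∈ V, ∀ n : ℤ, v⟦n⟧ ∈ V) ∧
  (∀ u ∈ U, ∀ v ∈ V, ∀ f : u ⟶ v, f = 0) ∧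
  (∀ t : D, ∃ (u v : D) (f : u ⟶ t) (g : t ⟶ v) (h : v ⟶ u⟦(1 : ℤ)⟧),
     u ∈ U ∧ v ∈ V ∧ Triangle.mk f g h ∈ distTriang D)

namespace CategoryTheory.Triangulated

open ZeroObject

variable (C)

/-- The old Mathlib structure of a triangulated subcategory (removed from Mathlib). -/
structure Subcategory where
  P : C → Prop
  zero' : ∃ (Z : C) (_ : IsZero Z), P Z
  shift (X : C) (n : ℤ) : P X → P (X⟦n⟧)
  ext₂' (T : Triangle C) (_ : T ∈ distTriang C) : P T.obj₁ → P T.obj₃ →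
    ObjectProperty.isoClosure P T.obj₂

namespace Subcategory

variable {C}

variable (S : Subcategory C)

lemma zero [ObjectProperty.IsClosedUnderIsomorphisms S.P] : S.P 0 := by
  obtain ⟨X, hX, mem⟩ := S.zero'
  exact ObjectProperty.prop_of_iso _ hX.isoZero mem

lemma ext₂ [ObjectProperty.IsClosedUnderIsomorphisms S.P]
    (T : Triangle C) (hT : T ∈ distTriang C) (h₁ : S.P T.obj₁)
    (h₃ : S.P T.obj₃) : S.P T.obj₂ := by
  simpa only [ObjectProperty.isoClosure_eq_self] using S.ext₂' T hT h₁ h₃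

/-- Constructor for a triangulated subcategory. -/
def mk' (P : C → Prop) (zero : P 0)
    (shift : ∀ (X : C) (n : ℤ), P X → P (X⟦n⟧))
    (ext₂ : ∀ (T : Triangle C) (_ : T ∈ distTriang C), P T.obj₁ → P T.obj₃ → P T.obj₂) :
    Subcategory C where
  P := P
  zero' := ⟨0, isZero_zero _, zero⟩
  shift := shift
  ext₂' T hT h₁ h₃ := ObjectProperty.le_isoClosure P _ (ext₂ T hT h₁ h₃)

instance : ObjectProperty.IsTriangulated S.P where
  exists_zero := by
    obtain ⟨Z, hZ, h⟩ := S.zero'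
    exact ⟨Z, hZ, h⟩
  isStableUnderShiftBy a := ⟨fun X h => S.shift X a h⟩
  ext₂' := S.ext₂'

/-- The class of morphisms whose cone is in `S`. -/
abbrev W : MorphismProperty C := ObjectProperty.trW S.P

end Subcategory

end CategoryTheory.Triangulated

/-- The intersection of two (strictly full) triangulated subcategories. -/
def interSub (X Y : Triangulated.Subcategory C) [ObjectProperty.IsClosedUnderIsomorphisms X.P]
    [ObjectProperty.IsClosedUnderIsomorphisms Y.P] : Triangulated.Subcategory C :=
  Triangulated.Subcategory.mk' (fun t => X.P t ∧ Y.P t)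
    ⟨X.zero, Y.zero⟩
    (fun t n h => ⟨X.shift t n h.1, Y.shift t n h.2⟩)
    (fun T hT h₁ h₃ => ⟨X.ext₂ T hT h₁.1 h₃.1, Y.ext₂ T hT h₁.2 h₃.2⟩)

section

variable {A B : Type*} [Category A] [Category B]

lemma map_eq_zero_of_comp_eq_zero [HasZeroMorphisms A] [HasZeroMorphisms B]
    (L : A ⥤ B) [L.PreservesZeroMorphisms] {W : MorphismProperty A} (hL : W.IsInvertedBy L)
    {x y y' : A} {a : x ⟶ y} {s : y ⟶ y'} (hs : W s) (h : a ≫ s = 0) : L.map a = 0 := by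
  have : IsIso (L.map s) := hL s hs
  rw [← cancel_mono (L.map s), ← L.map_comp, h, L.map_zero, zero_comp]

lemma shift_mem_essImage [HasShift A ℤ] [HasShift B ℤ] (F : A ⥤ B) [F.CommShift ℤ]
    (P : ObjectProperty A) [P.IsStableUnderShift ℤ] {d : B}
    (hd : d ∈ {d | ∃ x, P x ∧ Nonempty (d ≅ F.obj x)}) (n : ℤ) :
    d⟦n⟧ ∈ {d | ∃ x, P x ∧ Nonempty (d ≅ F.obj x)} := by
  obtain ⟨x, hx, ⟨e⟩⟩ := hd
  exact ⟨x⟦n⟧, P.le_shift n x hx,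
    ⟨(shiftFunctor B n).mapIso e ≪≫ ((F.commShiftIso n).app x).symm⟩⟩

end

section

variable {D : Type*} [Category D] [HasZeroObject D] [HasShift D ℤ] [Preadditive D]
  [∀ n : ℤ, (shiftFunctor D n).Additive] [Pretriangulated D]

lemma mk_comp_iso_of_distTriang {x b y t : D} {f : x ⟶ b} {g : b ⟶ y} {h : y ⟶ x⟦(1 : ℤ)⟧}
    (hT : Triangle.mk f g h ∈ distTriang D) (e : b ≅ t) :
    Triangle.mk (f ≫ e.hom) (e.inv ≫ g) h ∈ distTriang D :=
  isomorphic_distinguished _ hT _ (Triangle.isoMk _ _ (Iso.refl x) e.symm (Iso.refl y)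
    (show (f ≫ e.hom) ≫ e.inv = 𝟙 x ≫ f by simp)
    (show (e.inv ≫ g) ≫ 𝟙 y = e.inv ≫ g by simp)
    (show h ≫ (𝟙 x)⟦(1 : ℤ)⟧' = 𝟙 y ≫ h by simp))

lemma mem_star_essImage (F : C ⥤ D) [F.CommShift ℤ] [F.IsTriangulated] [F.EssSurj]
    {S T : Set C} (hST : ∀ E : C, E ∈ star S T) (t : D) :
    t ∈ star {d | ∃ x, x ∈ S ∧ Nonempty (d ≅ F.obj x)}
      {d | ∃ y, y ∈ T ∧ Nonempty (d ≅ F.obj y)} := by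
  obtain ⟨x, y, f, g, h, hx, hy, hT⟩ := hST (F.objPreimage t)
  exact ⟨_, _, _, _, _, ⟨x, hx, ⟨Iso.refl _⟩⟩, ⟨y, hy, ⟨Iso.refl _⟩⟩,
    mk_comp_iso_of_distTriang (F.map_distinguished _ hT) (F.objObjPreimageIso t)⟩

end

section

variable [IsTriangulated C] (P Q U : ObjectProperty C)
  [P.IsTriangulated] [Q.IsTriangulated] [P.IsClosedUnderIsomorphisms] [Q.IsClosedUnderIsomorphisms]

/-- Split the cone `c` of `a` as `xc ⟶ c ⟶ yc` with `xc ∈ P`, `yc ∈ Q`; the octahedral axiom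
applied to `y ⟶ c ⟶ yc` puts the cone of this composite both in `P` (an extension of `xc⟦1⟧`
by `x⟦1⟧`) and in `Q` (the cone of a map between objects of `Q`). -/
lemma exists_trW_comp_eq_zero (hU : P ⊓ Q ≤ U)
    (hstar : ∀ E : C, E ∈ star {x | P x} {y | Q y})
    {x y : C} (a : x ⟶ y) (hx : P x) (hy : Q y) :
    ∃ (y' : C) (s : y ⟶ y'), U.trW s ∧ a ≫ s = 0 := by
  obtain ⟨c, b, d, hcone⟩ := distinguished_cocone_triangle a
  obtain ⟨xc, yc, e, f, g, hxc, hyc, hc⟩ := hstar c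
  obtain ⟨z, p, q, hz⟩ := distinguished_cocone_triangle (b ≫ f)
  have H := Triangulated.someOctahedron rfl (rot_of_distTriang _ hcone)
    (rot_of_distTriang _ hc) hz
  have hzP : P z := P.ext_of_isTriangulatedClosed₂ _ H.mem (P.le_shift 1 x hx)
    (P.le_shift 1 xc hxc)
  have hzQ : Q z := Q.ext_of_isTriangulatedClosed₃ _ hz hy hyc
  refine ⟨yc, b ≫ f, ⟨z, p, q, hz, hU z ⟨hzP, hzQ⟩⟩, ?_⟩
  rw [← Category.assoc, show a ≫ b = 0 from comp_distTriang_mor_zero₁₂ _ hcone, zero_comp]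

variable {D : Type*} [Category D] [HasZeroMorphisms D] (L : C ⥤ D)
  [L.PreservesZeroMorphisms] [L.IsLocalization U.trW]

lemma map_eq_zero_of_star (hU : P ⊓ Q ≤ U) (hstar : ∀ E : C, E ∈ star {x | P x} {y | Q y})
    {x y : C} (a : x ⟶ y) (hx : P x) (hy : Q y) : L.map a = 0 := by
  obtain ⟨y', s, hs, hzero⟩ := exists_trW_comp_eq_zero P Q U hU hstar a hx hy
  exact map_eq_zero_of_comp_eq_zero L (Localization.inverts L U.trW) hs hzero

lemma hom_essImage_eq_zero_of_star [U.IsTriangulated] (hUP : U ≤ P) (hU : P ⊓ Q ≤ U)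
    (hstar : ∀ E : C, E ∈ star {x | P x} {y | Q y})
    {u v : D} (hu : u ∈ {d | ∃ x, P x ∧ Nonempty (d ≅ L.obj x)})
    (hv : v ∈ {d | ∃ y, Q y ∧ Nonempty (d ≅ L.obj y)}) (f : u ⟶ v) : f = 0 := by
  obtain ⟨x, hx, ⟨eu⟩⟩ := hu
  obtain ⟨y, hy, ⟨ev⟩⟩ := hv
  suffices h : eu.inv ≫ f ≫ ev.hom = 0 by
    simpa using eu.hom ≫= h =≫ ev.inv
  obtain ⟨φ, hφ⟩ := Localization.exists_rightFraction L U.trW (eu.inv ≫ f ≫ ev.hom)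
  obtain ⟨z, g, h, hT, hz⟩ := φ.hs
  have hx' : P φ.X' := P.ext_of_isTriangulatedClosed₁ _ hT hx (hUP z hz)
  rw [hφ, MorphismProperty.RightFraction.map, map_eq_zero_of_star P Q U L hU hstar φ.f hx' hy,
    comp_zero]

end

/-- `X/U` and `Y/U` are realized as the essential images of `X` and `Y` under the localization
functor. -/
theorem stable_t_structure_of_star_eq_top_general [IsTriangulated C]
    (X Y : Triangulated.Subcategory C)
    [ObjectProperty.IsClosedUnderIsomorphisms X.P] [ObjectProperty.IsClosedUnderIsomorphisms Y.P]
    (hstar : ∀ E : C, E ∈ star {x | X.P x} {y | Y.P y}) :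
    IsStableTStructure (interSub X Y).W.Localization
      {d | ∃ x : C, X.P x ∧ Nonempty (d ≅ (interSub X Y).W.Q.obj x)}
      {d | ∃ y : C, Y.P y ∧ Nonempty (d ≅ (interSub X Y).W.Q.obj y)} :=
  have := Localization.essSurj (interSub X Y).W.Q (interSub X Y).W
  ⟨fun _ hu n => shift_mem_essImage _ X.P hu n,
    fun _ hv n => shift_mem_essImage _ Y.P hv n,
    fun _ hu _ hv f => hom_essImage_eq_zero_of_star X.P Y.P (interSub X Y).P _
      (fun _ h => h.1) (fun _ h => h) hstar hu hv f,
    mem_star_essImage _ hstar⟩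

/-- (Jørgensen–Kato) If `X`, `Y` are thick subcategories of a triangulated category `C`
with `U = X ∩ Y` and `X * Y = C`, then `(X/U, Y/U)` is a stable t-structure on the
Verdier quotient `C/U`, where `X/U` and `Y/U` are realized as the essential images of
`X` and `Y` under the localization functor. -/
theorem stable_t_structure_of_star_eq_top [IsTriangulated C]
    (X Y : Triangulated.Subcategory C)
    [ObjectProperty.IsClosedUnderIsomorphisms X.P] [ObjectProperty.IsClosedUnderIsomorphisms Y.P]
    (hXthick : ∀ ⦃a b : C⦄ (i : a ⟶ b) (r : b ⟶ a), i ≫ r = 𝟙 a → X.P b → X.P a)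
    (hYthick : ∀ ⦃a b : C⦄ (i : a ⟶ b) (r : b ⟶ a), i ≫ r = 𝟙 a → Y.P b → Y.P a)
    (hstar : ∀ E : C, E ∈ star {x | X.P x} {y | Y.P y}) :
    IsStableTStructure (interSub X Y).W.Localization
      {d | ∃ x : C, X.P x ∧ Nonempty (d ≅ (interSub X Y).W.Q.obj x)}
      {d | ∃ y : C, Y.P y ∧ Nonempty (d ≅ (interSub X Y).W.Q.obj y)} :=
  stable_t_structure_of_star_eq_top_general X Y hstar
end

section
/- The operation * on full subcategories of a triangulated category is associative: for full subcategories X, Y, Z of a triangulated category T closed under isomorphisms, (X * Y) * Z = X * (Y * Z). -/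
open CategoryTheory Limits Pretriangulated

universe v u

variable {C : Type u} [Category.{v} C] [HasZeroObject C] [HasShift C ℤ]
  [Preadditive C] [∀ n : ℤ, (shiftFunctor C n).Additive] [Pretriangulated C]

lemma mem_star_of_triangle {S T : Set C} {Tr : Triangle C} (h : Tr ∈ distTriang C)
    (h1 : Tr.obj₁ ∈ S) (h3 : Tr.obj₃ ∈ T) : Tr.obj₂ ∈ star S T :=
  ⟨Tr.obj₁, Tr.obj₃, Tr.mor₁, Tr.mor₂, Tr.mor₃, h1, h3, h⟩

/-- The operation `*` on full subcategories of a triangulated category is associative. -/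
theorem star_assoc [IsTriangulated C] (X Y Z : Set C)
    (hX : ∀ ⦃a b : C⦄, (a ≅ b) → a ∈ X → b ∈ X)
    (hY : ∀ ⦃a b : C⦄, (a ≅ b) → a ∈ Y → b ∈ Y)
    (hZ : ∀ ⦃a b : C⦄, (a ≅ b) → a ∈ Z → b ∈ Z) :
    star (star X Y) Z = star X (star Y Z) := by
  ext E
  constructor
  · rintro ⟨A, Cc, f, g, w, ⟨X₀, Y₀, a, b, c, hX₀, hY₀, hA⟩, hCc, hE⟩
    obtain ⟨W, g', w', hW⟩ := distinguished_cocone_triangle (a ≫ f)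
    have O := Triangulated.someOctahedron (u₁₂ := a) (u₂₃ := f) rfl hA hE hW
    exact ⟨X₀, W, a ≫ f, g', w', hX₀,
      ⟨Y₀, Cc, O.m₁, O.m₃, _, hY₀, hCc, O.mem⟩, hW⟩
  · rintro ⟨X₀, W, f, g, w, hX₀, ⟨Y₀, Z₀, a, b, c, hY₀, hZ₀, hT'⟩, hT⟩
    obtain ⟨V, p, q, hV⟩ := distinguished_cocone_triangle (g ≫ b)
    have O := Triangulated.someOctahedron (u₁₂ := g) (u₂₃ := b) rfl
      (rot_of_distTriang _ hT) (rot_of_distTriang _ hT') hV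
    have hVmem : (V⟦(-1 : ℤ)⟧) ∈ star X Y := by
      have := Pretriangulated.Triangle.shift_distinguished _ O.mem (-1)
      refine mem_star_of_triangle this ?_ ?_
      · exact hX ((shiftFunctorCompIsoId C (1 : ℤ) (-1) (by omega)).app X₀).symm hX₀
      · exact hY ((shiftFunctorCompIsoId C (1 : ℤ) (-1) (by omega)).app Y₀).symm hY₀
    exact mem_star_of_triangle (inv_rot_of_distTriang _ hV) hVmem hZ₀
end

section
/- Let E be a full additive Karoubian subcategory of an abelian category A. Then K^{∞,+}(E) = K^{+}(E) * K^{∞,b}(E), i.e., every unbounded complex of objects of E with left bounded cohomology is the middle term of a distinguished triangle in K(E) whose first term is (homotopy equivalent to) a left bounded complex and whose third term has bounded cohomology. -/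
/-!
Cut `X` brutally at a degree `N` below which it is exact: `σ_{≥N} X → X → σ_{<N} X` is a short
exact sequence of complexes which splits in each degree, hence gives a distinguished triangle in
the homotopy category. The first term vanishes below `N`; the third agrees with `X` below `N` and
vanishes from `N` on, so it is exact outside degree `N - 1`. In each degree both truncations are
either the object of `X` or `0`.
-/

open CategoryTheory Limits Pretriangulated ZeroObject

namespace HomologicalComplex

variable {C : Type*} [Category* C] {ι : Type*} {c : ComplexShape ι}

section

variable [HasZeroMorphisms C] [HasZeroObject C] (X : HomologicalComplex C c) (p : ι → Prop)
  [DecidablePred p]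

/-- Unlike Mathlib's `stupidTrunc`, each degree is *equal* to `X.X i` or `0`, not merely isomorphic,
so properties of objects that are not closed under isomorphism pass to the truncation. -/
noncomputable def brutalTrunc : HomologicalComplex C c where
  X i := if p i then X.X i else 0
  d i j := if h : p i ∧ p j then eqToHom (if_pos h.1) ≫ X.d i j ≫ eqToHom (if_pos h.2).symm else 0
  shape i j hij := by simp [X.shape i j hij]
  d_comp_d' i j k _ _ := by
    by_cases hij : p i ∧ p j
    · by_cases hjk : p j ∧ p k
      · simp [dif_pos hij, dif_pos hjk]
      · rw [dif_neg hjk, comp_zero]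
    · rw [dif_neg hij, zero_comp]

variable {X p}

noncomputable def brutalTruncXIso {i : ι} (hi : p i) : (X.brutalTrunc p).X i ≅ X.X i :=
  eqToIso (if_pos hi)

lemma isZero_brutalTrunc_X {i : ι} (hi : ¬ p i) : IsZero ((X.brutalTrunc p).X i) := by
  simpa only [brutalTrunc, if_neg hi] using Limits.isZero_zero C

lemma brutalTrunc_d_comp_brutalTruncXIso_hom {i j : ι} (hi : p i) (hj : p j) :
    (X.brutalTrunc p).d i j ≫ (brutalTruncXIso hj).hom = (brutalTruncXIso hi).hom ≫ X.d i j := by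
  simp [brutalTrunc, brutalTruncXIso, dif_pos (And.intro hi hj)]

lemma brutalTrunc_X_of_forall (P : C → Prop) (hzero : ∀ Z, IsZero Z → P Z)
    (hX : ∀ i, P (X.X i)) (i : ι) : P ((X.brutalTrunc p).X i) := by
  by_cases hi : p i
  · simpa only [brutalTrunc, if_pos hi] using hX i
  · exact hzero _ (isZero_brutalTrunc_X hi)

lemma exactAt_brutalTrunc_iff {i : ι} (hprev : p (c.prev i)) (hi : p i) (hnext : p (c.next i)) :
    (X.brutalTrunc p).ExactAt i ↔ X.ExactAt i :=
  ShortComplex.exact_iff_of_iso <| ShortComplex.isoMk (brutalTruncXIso hprev) (brutalTruncXIso hi)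
    (brutalTruncXIso hnext) (brutalTrunc_d_comp_brutalTruncXIso_hom hprev hi).symm
    (brutalTrunc_d_comp_brutalTruncXIso_hom hi hnext).symm

variable (X p)

noncomputable def brutalTruncXι (i : ι) : (X.brutalTrunc p).X i ⟶ X.X i :=
  if hi : p i then (brutalTruncXIso hi).hom else 0

noncomputable def brutalTruncXπ (i : ι) : X.X i ⟶ (X.brutalTrunc p).X i :=
  if hi : p i then (brutalTruncXIso hi).inv else 0

lemma brutalTruncXι_comp_brutalTruncXπ (i : ι) :
    X.brutalTruncXι p i ≫ X.brutalTruncXπ p i = 𝟙 _ := by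
  by_cases hi : p i
  · simp [brutalTruncXι, brutalTruncXπ, hi]
  · exact (isZero_brutalTrunc_X hi).eq_of_src _ _

lemma brutalTruncXι_comp_brutalTruncXπ_not (i : ι) :
    X.brutalTruncXι p i ≫ X.brutalTruncXπ (fun i => ¬ p i) i = 0 := by
  by_cases hi : p i
  · simp [brutalTruncXπ, hi]
  · exact (isZero_brutalTrunc_X hi).eq_of_src _ _

variable (hp : ∀ i j, c.Rel i j → p i → p j)
include hp

noncomputable def ιBrutalTrunc : X.brutalTrunc p ⟶ X where
  f := X.brutalTruncXι p
  comm' i j hij := by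
    by_cases hi : p i
    · simp [brutalTruncXι, hi, hp i j hij hi, brutalTrunc_d_comp_brutalTruncXIso_hom hi]
    · exact (isZero_brutalTrunc_X hi).eq_of_src _ _

noncomputable def πBrutalTrunc : X ⟶ X.brutalTrunc (fun i => ¬ p i) where
  f := X.brutalTruncXπ (fun i => ¬ p i)
  comm' i j hij := by
    by_cases hj : ¬ p j
    · have hi : ¬ p i := fun hi => hj (hp i j hij hi)
      rw [← cancel_mono (brutalTruncXIso (p := fun i => ¬ p i) hj).hom]
      simp [brutalTruncXπ, hi, hj, brutalTrunc_d_comp_brutalTruncXIso_hom (p := fun i => ¬ p i) hi hj]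
    · exact (isZero_brutalTrunc_X (p := fun i => ¬ p i) hj).eq_of_tgt _ _

noncomputable def brutalTruncShortComplex : ShortComplex (HomologicalComplex C c) :=
  ShortComplex.mk (X.ιBrutalTrunc p hp) (X.πBrutalTrunc p hp) <| by
    ext i
    exact X.brutalTruncXι_comp_brutalTruncXπ_not p i

end

variable [Preadditive C] [HasZeroObject C] (X : HomologicalComplex C c) (p : ι → Prop)
  [DecidablePred p]

lemma brutalTruncXπ_comp_brutalTruncXι_add (i : ι) :
    X.brutalTruncXπ p i ≫ X.brutalTruncXι p i +
      X.brutalTruncXπ (fun i => ¬ p i) i ≫ X.brutalTruncXι (fun i => ¬ p i) i = 𝟙 _ := by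
  by_cases hi : p i <;> simp [brutalTruncXπ, brutalTruncXι, hi]

noncomputable def brutalTruncSplitting (hp : ∀ i j, c.Rel i j → p i → p j) (n : ι) :
    ((X.brutalTruncShortComplex p hp).map (eval C c n)).Splitting where
  r := X.brutalTruncXπ p n
  s := X.brutalTruncXι (fun i => ¬ p i) n
  f_r := X.brutalTruncXι_comp_brutalTruncXπ p n
  s_g := X.brutalTruncXι_comp_brutalTruncXπ (fun i => ¬ p i) n
  id := X.brutalTruncXπ_comp_brutalTruncXι_add p n

end HomologicalComplex

lemma HomotopyCategory.trianglehOfDegreewiseSplit_distinguished {C : Type*} [Category* C]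
    [Preadditive C] [HasZeroObject C] [HasBinaryBiproducts C]
    (S : ShortComplex (CochainComplex C ℤ))
    (σ : ∀ n, (S.map (HomologicalComplex.eval C _ n)).Splitting) :
    CochainComplex.trianglehOfDegreewiseSplit S σ ∈ distTriang _ :=
  (distinguished_iff_iso_trianglehOfDegreewiseSplit _).2 ⟨S, σ, ⟨Iso.refl _⟩⟩

universe w v u

namespace St7

variable {A : Type u} [Category.{v} A] [Abelian A]

open HomologicalComplex

theorem stmt7_general (P : A → Prop)
    (hzero : ∀ Z : A, IsZero Z → P Z)
    (X : CochainComplex A ℤ) (hXP : ∀ i, P (X.X i))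
    (hX : ∃ N : ℤ, ∀ i ≤ N, X.ExactAt i) :
    ∃ (Y Z : CochainComplex A ℤ),
      (∀ i, P (Y.X i)) ∧ (∃ N : ℤ, ∀ i < N, IsZero (Y.X i)) ∧
      (∀ i, P (Z.X i)) ∧ (∃ a b : ℤ, ∀ i, (i < a ∨ b < i) → Z.ExactAt i) ∧
      ∃ (f : (HomotopyCategory.quotient A (ComplexShape.up ℤ)).obj Y ⟶
          (HomotopyCategory.quotient A (ComplexShape.up ℤ)).obj X)
        (g : (HomotopyCategory.quotient A (ComplexShape.up ℤ)).obj X ⟶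
          (HomotopyCategory.quotient A (ComplexShape.up ℤ)).obj Z)
        (h : (HomotopyCategory.quotient A (ComplexShape.up ℤ)).obj Z ⟶
          ((HomotopyCategory.quotient A (ComplexShape.up ℤ)).obj Y)⟦(1 : ℤ)⟧),
        Triangle.mk f g h ∈ distTriang (HomotopyCategory A (ComplexShape.up ℤ)) := by
  obtain ⟨N, hN⟩ := hX
  have hp : ∀ i j, (ComplexShape.up ℤ).Rel i j → N ≤ i → N ≤ j := by
    rintro i _ rfl hi
    omega
  refine ⟨X.brutalTrunc (N ≤ ·), X.brutalTrunc (fun i => ¬ N ≤ i),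
    brutalTrunc_X_of_forall P hzero hXP, ⟨N, fun i hi => isZero_brutalTrunc_X (by omega)⟩,
    brutalTrunc_X_of_forall P hzero hXP, ⟨N - 1, N - 1, fun i hi => ?_⟩, _, _, _,
    HomotopyCategory.trianglehOfDegreewiseSplit_distinguished _ (X.brutalTruncSplitting _ hp)⟩
  rcases hi with hi | hi
  · rw [exactAt_brutalTrunc_iff (by rw [CochainComplex.prev]; omega) (by omega)
      (by rw [CochainComplex.next]; omega)]
    exact hN i (by omega)
  · exact .of_isZero (isZero_brutalTrunc_X (by omega))

theorem stmt7 (P : A → Prop)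
    (hzero : ∀ Z : A, IsZero Z → P Z)
    (hsum : ∀ a b : A, P a → P b → P (a ⊞ b))
    (hkaroubi : ∀ ⦃a b : A⦄ (i : a ⟶ b) (r : b ⟶ a), i ≫ r = 𝟙 a → P b → P a)
    (X : CochainComplex A ℤ) (hXP : ∀ i, P (X.X i))
    (hX : ∃ N : ℤ, ∀ i ≤ N, X.ExactAt i) :
    ∃ (Y Z : CochainComplex A ℤ),
      (∀ i, P (Y.X i)) ∧ (∃ N : ℤ, ∀ i < N, IsZero (Y.X i)) ∧
      (∀ i, P (Z.X i)) ∧ (∃ a b : ℤ, ∀ i, (i < a ∨ b < i) → Z.ExactAt i) ∧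
      ∃ (f : (HomotopyCategory.quotient A (ComplexShape.up ℤ)).obj Y ⟶
          (HomotopyCategory.quotient A (ComplexShape.up ℤ)).obj X)
        (g : (HomotopyCategory.quotient A (ComplexShape.up ℤ)).obj X ⟶
          (HomotopyCategory.quotient A (ComplexShape.up ℤ)).obj Z)
        (h : (HomotopyCategory.quotient A (ComplexShape.up ℤ)).obj Z ⟶
          ((HomotopyCategory.quotient A (ComplexShape.up ℤ)).obj Y)⟦(1 : ℤ)⟧),
        Triangle.mk f g h ∈ distTriang (HomotopyCategory A (ComplexShape.up ℤ)) :=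
  stmt7_general P hzero X hXP hX

end St7
end

section
/- Let A be an Iwanaga-Gorenstein ring and P the category of finitely generated projective A-modules. Then K^{+,∅}(P) = 0: every left bounded acyclic complex of finitely generated projective A-modules is contractible. -/
/-! Write `Zⁱ = ker dⁱ ⊆ Xⁱ`. By exactness `dⁱ⁻¹` maps `Xⁱ⁻¹` onto `Zⁱ` with kernel `Zⁱ⁻¹`, and
once every inclusion `Zⁱ ⊆ Xⁱ` has a retraction these retractions, together with the induced
sections of `Xⁱ⁻¹ → Zⁱ`, assemble into a contracting homotopy. Retractions are built from the
left, where `Zⁱ = 0`. If `Zⁱ` is a retract of `Xⁱ`, then `Zⁱ⁺¹` is a direct summand of `Xⁱ`,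
hence finitely generated projective. The truncation `⋯ → X^(c+n-1) → X^(c+n)` is a projective
resolution of `Z^(c+n+1)`, so `Ext^(n+1)(Z^(c+n+1), A) = 0` says that every map `Zᶜ → A` extends
to `Xᶜ`; hence so does every map from `Zᶜ` to a finitely generated projective module, a retract
of some `Aᵏ`. Taking `c = i + 1` and the identity of `Zⁱ⁺¹` gives the next retraction. -/

open CategoryTheory Limits Opposite

universe u

namespace St12

section Abelian

variable {C : Type*} [Category* C] [Abelian C]

noncomputable def projectiveResolutionOfExact {M : C} (Q : ChainComplex C ℕ)
    [∀ t, Projective (Q.X t)] (hQ : ∀ t, Q.ExactAt (t + 1)) (π : Q.X 0 ⟶ M) [Epi π] (w : Q.d 1 0 ≫ π = 0)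
    (hπ : (ShortComplex.mk _ _ w).Exact) : ProjectiveResolution M where
  complex := Q
  π := (ChainComplex.toSingle₀Equiv _ _).symm ⟨π, w⟩
  quasiIso := ⟨fun t => by
    cases t with
    | zero =>
      rw [ChainComplex.quasiIsoAt₀_iff,
        ShortComplex.quasiIso_iff_of_zeros' _ (Q.shape 0 0 (by simp)) rfl rfl]
      simp only [HomologicalComplex.shortComplexFunctor'_map_τ₂,
        ChainComplex.toSingle₀Equiv_symm_apply_f_zero]
      exact ⟨hπ, ‹Epi π›⟩
    | succ t =>
      rw [quasiIsoAt_iff_exactAt' _ _ (ChainComplex.exactAt_succ_single_obj _ _)]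
      exact hQ t⟩

variable [EnoughProjectives C]

lemma exists_d_comp_eq_of_isZero_Ext {M : C} (P : ProjectiveResolution M)
    {k : ℕ} {Y : C} (hM : IsZero (((Ext ℤ C (k + 1)).obj (op M)).obj Y))
    (g : P.complex.X (k + 1) ⟶ Y) (hg : P.complex.d (k + 2) (k + 1) ≫ g = 0) :
    ∃ h : P.complex.X k ⟶ Y, P.complex.d (k + 1) k ≫ h = g := by
  have hexact := (HomologicalComplex.exactAt_iff_isZero_homology _ _).2
    (hM.of_iso (P.isoExt (k + 1) Y).symm)
  rw [HomologicalComplex.exactAt_iff' _ k (k + 1) (k + 2) (by simp) (by simp),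
    ShortComplex.moduleCat_exact_iff] at hexact
  exact hexact g hg

end Abelian

section Module

variable {A : Type*} [Ring A] {M P : Type*} [AddCommGroup M] [Module A M]
  [AddCommGroup P] [Module A P] {N : Submodule A M}

lemma exists_comp_subtype_eq_of_projective
    (hA : ∀ f : N →ₗ[A] A, ∃ h : M →ₗ[A] A, h ∘ₗ N.subtype = f)
    [Module.Finite A P] [Module.Projective A P] (f : N →ₗ[A] P) :
    ∃ h : M →ₗ[A] P, h ∘ₗ N.subtype = f := by
  obtain ⟨k, π, hπ⟩ := Module.Finite.exists_fin' A P
  obtain ⟨σ, hσ⟩ := Module.projective_lifting_property π LinearMap.id hπ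
  choose h hh using fun t : Fin k => hA (LinearMap.proj t ∘ₗ σ ∘ₗ f)
  refine ⟨π ∘ₗ LinearMap.pi h, ?_⟩
  have hpi : LinearMap.pi h ∘ₗ N.subtype = σ ∘ₗ f := by
    ext x t
    exact LinearMap.congr_fun (hh t) x
  rw [LinearMap.comp_assoc, hpi, ← LinearMap.comp_assoc, hσ, LinearMap.id_comp]

lemma exists_section_of_retraction (g : M →ₗ[A] P) (hg : Function.Surjective g)
    (hker : LinearMap.ker g = N) (r : M →ₗ[A] N) (hr : r ∘ₗ N.subtype = LinearMap.id) :
    ∃ s : P →ₗ[A] M, g ∘ₗ s = LinearMap.id ∧ N.subtype ∘ₗ r + s ∘ₗ g = LinearMap.id := by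
  subst hker
  let p : M →ₗ[A] M := LinearMap.id - (LinearMap.ker g).subtype ∘ₗ r
  have hp : ∀ x ∈ LinearMap.ker g, p x = 0 := by
    intro x hx
    simpa [p, sub_eq_zero] using congrArg Subtype.val (LinearMap.congr_fun hr ⟨x, hx⟩).symm
  let s := (LinearMap.ker g).liftQ p hp ∘ₗ (g.quotKerEquivOfSurjective hg).symm.toLinearMap
  have hs : ∀ x, s (g x) = x - r x := fun x => by
    have hmk : (g.quotKerEquivOfSurjective hg).symm (g x) = Submodule.Quotient.mk x :=
      (LinearEquiv.symm_apply_eq _).2 (g.quotKerEquivOfSurjective_apply_mk hg x).symm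
    simp only [s, LinearMap.comp_apply, LinearEquiv.coe_coe, hmk]
    rfl
  refine ⟨s, LinearMap.ext fun p => ?_, LinearMap.ext fun x => by simp [hs]⟩
  obtain ⟨x, rfl⟩ := hg p
  have hrx : g (r x) = 0 := (r x).2
  simp [hs, hrx]

end Module

section Complex

variable {A : Type u} [Ring A]

lemma moduleCat_exactAt_iff {ι : Type*} {c : ComplexShape ι}
    (K : HomologicalComplex (ModuleCat.{u} A) c) {i j k : ι} (hi : c.prev j = i)
    (hk : c.next j = k) :
    K.ExactAt j ↔ ∀ x : K.X j, K.d j k x = 0 → ∃ y : K.X i, K.d i j y = x := by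
  rw [HomologicalComplex.exactAt_iff' K i j k hi hk, ShortComplex.moduleCat_exact_iff]
  rfl

variable (X : CochainComplex (ModuleCat.{u} A) ℤ)

lemma exists_d_eq_of_exactAt {i j k : ℤ} (hj : X.ExactAt j) (hij : i + 1 = j) (hjk : j + 1 = k)
    {x : X.X j} (hx : X.d j k x = 0) : ∃ y : X.X i, X.d i j y = x :=
  (moduleCat_exactAt_iff X
    (by simp [← hij]) (by simp [← hjk])).1 hj x hx

lemma d_d_apply (i j k : ℤ) (x : X.X i) : X.d j k (X.d i j x) = 0 :=
  LinearMap.congr_fun (congrArg ModuleCat.Hom.hom (X.d_comp_d i j k)) x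

def cycleSubmodule (i : ℤ) : Submodule A (X.X i) := LinearMap.ker (X.d i (i + 1)).hom

def HasCycleRetraction (i : ℤ) : Prop :=
  ∃ r : X.X i →ₗ[A] cycleSubmodule X i, r ∘ₗ (cycleSubmodule X i).subtype = LinearMap.id

def toCycleSubmodule (i j : ℤ) : X.X i →ₗ[A] cycleSubmodule X j :=
  LinearMap.codRestrict _ (X.d i j).hom fun x => d_d_apply X i j (j + 1) x

lemma ker_toCycleSubmodule (i : ℤ) :
    LinearMap.ker (toCycleSubmodule X i (i + 1)) = cycleSubmodule X i :=
  LinearMap.ker_codRestrict _ _ _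

lemma toCycleSubmodule_surjective {i j : ℤ} (hj : X.ExactAt j) (hij : i + 1 = j) :
    Function.Surjective (toCycleSubmodule X i j) := by
  rintro ⟨x, hx⟩
  obtain ⟨y, hy⟩ := exists_d_eq_of_exactAt X hj hij rfl hx
  exact ⟨y, Subtype.ext hy⟩

noncomputable def cycleSubmoduleResolution (hproj : ∀ i, Module.Projective A (X.X i))
    (hac : ∀ i, X.ExactAt i) (m : ℤ) :
    ProjectiveResolution (ModuleCat.of A (cycleSubmodule X (m + 1))) :=
  letI Q := X.restriction (ComplexShape.embeddingUpIntLE m)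
  letI π : Q.X 0 ⟶ ModuleCat.of A (cycleSubmodule X (m + 1)) :=
    ModuleCat.ofHom (toCycleSubmodule X _ _)
  haveI (t : ℕ) : Projective (Q.X t) := (IsProjective.iff_projective _).1 (hproj _)
  haveI : Epi π :=
    (ModuleCat.epi_iff_surjective _).2 (toCycleSubmodule_surjective X (hac _) (by simp))
  projectiveResolutionOfExact Q
    (fun t => (moduleCat_exactAt_iff Q (i := t + 2) (k := t)
      (by simp) (by simp)).2
      fun _ hx => exists_d_eq_of_exactAt X (hac _) (by simp; lia) (by simp; lia) hx)
    π (ModuleCat.hom_ext (LinearMap.ext fun x => Subtype.ext (d_d_apply X _ _ _ x)))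
    ((ShortComplex.moduleCat_exact_iff _).2 fun _ hx =>
      exists_d_eq_of_exactAt X (hac _) (by simp) (by simp) (congrArg Subtype.val hx))

lemma exists_comp_subtype_eq_of_isZero_Ext {n : ℕ}
    (hExt : ∀ M : ModuleCat.{u} A,
      IsZero (((Ext ℤ (ModuleCat.{u} A) (n + 1)).obj (op M)).obj (ModuleCat.of A A)))
    (hproj : ∀ i, Module.Projective A (X.X i)) (hac : ∀ i, X.ExactAt i) (c : ℤ)
    (f : cycleSubmodule X c →ₗ[A] A) :
    ∃ h : X.X c →ₗ[A] A, h ∘ₗ (cycleSubmodule X c).subtype = f := by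
  -- Writing `c = m - n` makes `Xᶜ` literally degree `n` of the resolution of `Z^(m+1)`.
  obtain ⟨m, rfl⟩ : ∃ m : ℤ, c = m - n := ⟨c + n, by ring⟩
  let P := cycleSubmoduleResolution X hproj hac m
  let g : P.complex.X (n + 1) ⟶ ModuleCat.of A A :=
    ModuleCat.ofHom (f ∘ₗ toCycleSubmodule X _ (m - n))
  have hg : P.complex.d (n + 2) (n + 1) ≫ g = 0 := by
    ext x
    change f (toCycleSubmodule X _ _ (X.d _ _ x)) = 0
    rw [show toCycleSubmodule X _ (m - n) (X.d _ _ x) = 0 from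
      Subtype.ext (d_d_apply X _ _ _ x), map_zero]
  obtain ⟨h, hh⟩ := exists_d_comp_eq_of_isZero_Ext P (hExt _) g hg
  refine ⟨h.hom, LinearMap.ext fun ⟨x, hx⟩ => ?_⟩
  obtain ⟨y, rfl⟩ := exists_d_eq_of_exactAt X (hac _) (i := m - (n + 1 : ℕ)) (by lia) rfl hx
  exact LinearMap.congr_fun (congrArg ModuleCat.Hom.hom hh) y

lemma hasCycleRetraction_succ {n : ℕ}
    (hExt : ∀ M : ModuleCat.{u} A,
      IsZero (((Ext ℤ (ModuleCat.{u} A) (n + 1)).obj (op M)).obj (ModuleCat.of A A)))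
    (hproj : ∀ i, Module.Projective A (X.X i)) (hfin : ∀ i, Module.Finite A (X.X i))
    (hac : ∀ i, X.ExactAt i) {i : ℤ}
    (hi : HasCycleRetraction X i) : HasCycleRetraction X (i + 1) := by
  obtain ⟨r, hr⟩ := hi
  have hsurj := toCycleSubmodule_surjective X (hac (i + 1)) rfl
  obtain ⟨s, hs, -⟩ := exists_section_of_retraction _ hsurj (ker_toCycleSubmodule X i) r hr
  have := hfin i
  have := hproj i
  have : Module.Finite A (cycleSubmodule X (i + 1)) := Module.Finite.of_surjective _ hsurj
  have : Module.Projective A (cycleSubmodule X (i + 1)) := Module.Projective.of_split s _ hs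
  exact exists_comp_subtype_eq_of_projective
    (exists_comp_subtype_eq_of_isZero_Ext X hExt hproj hac _) LinearMap.id

lemma hasCycleRetraction_of_isZero {i : ℤ} (hi : X.ExactAt i)
    (hzero : IsZero (X.X (i - 1))) : HasCycleRetraction X i := by
  refine ⟨0, LinearMap.ext fun ⟨x, hx⟩ => ?_⟩
  obtain ⟨y, rfl⟩ := exists_d_eq_of_exactAt X hi (i := i - 1) (by ring) rfl hx
  have := ModuleCat.subsingleton_of_isZero hzero
  exact Subtype.ext (by simp [Subsingleton.elim y 0])

lemma nonempty_homotopy_id_zero_of_hasCycleRetraction (hac : ∀ i, X.ExactAt i)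
    (hr : ∀ i, HasCycleRetraction X i) :
    Nonempty (Homotopy (𝟙 X) 0) := by
  choose r hr using hr
  have hs (i j : ℤ) (hji : j + 1 = i) : ∃ s : cycleSubmodule X i →ₗ[A] X.X j,
      toCycleSubmodule X j i ∘ₗ s = LinearMap.id ∧
        (cycleSubmodule X j).subtype ∘ₗ r j + s ∘ₗ toCycleSubmodule X j i = LinearMap.id := by
    subst hji
    exact exists_section_of_retraction _ (toCycleSubmodule_surjective X (hac _) rfl)
      (ker_toCycleSubmodule X j) (r j) (hr j)
  choose s hds hsplit using hs
  let h (i j : ℤ) (hji : (ComplexShape.up ℤ).Rel j i) : X.X i ⟶ X.X j :=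
    ModuleCat.ofHom (s i j hji ∘ₗ r i)
  have hid : Homotopy.nullHomotopicMap' h = 𝟙 X := by
    ext i x
    rw [Homotopy.nullHomotopicMap'_f (k₂ := i - 1) (k₀ := i + 1) (by simp) rfl]
    have hdx : r (i + 1) (X.d i (i + 1) x) = toCycleSubmodule X i (i + 1) x :=
      LinearMap.congr_fun (hr (i + 1)) (toCycleSubmodule X i (i + 1) x)
    have hdsr : X.d (i - 1) i (s i (i - 1) (by simp) (r i x)) = r i x :=
      congrArg Subtype.val (LinearMap.congr_fun (hds i (i - 1) _) (r i x))
    have hx : (r i x : X.X i) + s (i + 1) i rfl (toCycleSubmodule X i (i + 1) x) = x :=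
      LinearMap.congr_fun (hsplit (i + 1) i rfl) x
    change s (i + 1) i rfl (r (i + 1) (X.d i (i + 1) x)) +
      X.d (i - 1) i (s i (i - 1) _ (r i x)) = x
    rw [hdx, hdsr, add_comm]
    exact hx
  exact ⟨(Homotopy.ofEq hid.symm).trans (Homotopy.nullHomotopy' h)⟩

end Complex

theorem stmt12_general (A : Type u) [Ring A]
    (n : ℕ)
    (hleft : ∀ (M : ModuleCat.{u} A) (i : ℕ), n < i →
      IsZero (((_root_.Ext ℤ (ModuleCat.{u} A) i).obj (op M)).obj (ModuleCat.of A A)))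
    (X : CochainComplex (ModuleCat.{u} A) ℤ)
    (hproj : ∀ i, Module.Projective A (X.X i))
    (hfin : ∀ i, Module.Finite A (X.X i))
    (hlb : ∃ N : ℤ, ∀ i ≤ N, IsZero (X.X i))
    (hac : ∀ i, X.ExactAt i) :
    Nonempty (Homotopy (𝟙 X) 0) := by
  obtain ⟨N, hN⟩ := hlb
  have hExt (M : ModuleCat.{u} A) := hleft M (n + 1) n.lt_succ_self
  refine nonempty_homotopy_id_zero_of_hasCycleRetraction X hac fun i => ?_
  obtain hi | hi := lt_or_ge i (N + 1)
  · exact hasCycleRetraction_of_isZero X (hac i) (hN _ (by lia))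
  induction i, hi using Int.leInduction with
  | base => exact hasCycleRetraction_of_isZero X (hac _) (hN _ (by lia))
  | succ j _ ih => exact hasCycleRetraction_succ X hExt hproj hfin hac ih

theorem stmt12 (A : Type u) [Ring A] [IsNoetherianRing A] [IsNoetherianRing Aᵐᵒᵖ]
    (n : ℕ)
    (hleft : ∀ (M : ModuleCat.{u} A) (i : ℕ), n < i →
      IsZero (((_root_.Ext ℤ (ModuleCat.{u} A) i).obj (op M)).obj (ModuleCat.of A A)))
    (hright : ∀ (M : ModuleCat.{u} Aᵐᵒᵖ) (i : ℕ), n < i →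
      IsZero (((_root_.Ext ℤ (ModuleCat.{u} Aᵐᵒᵖ) i).obj (op M)).obj (ModuleCat.of Aᵐᵒᵖ Aᵐᵒᵖ)))
    (X : CochainComplex (ModuleCat.{u} A) ℤ)
    (hproj : ∀ i, Module.Projective A (X.X i))
    (hfin : ∀ i, Module.Finite A (X.X i))
    (hlb : ∃ N : ℤ, ∀ i ≤ N, IsZero (X.X i))
    (hac : ∀ i, X.ExactAt i) :
    Nonempty (Homotopy (𝟙 X) 0) :=
  stmt12_general A n hleft X hproj hfin hlb hac

end St12
end

section
/- Let A = K[x,y]/(x², y², xy) over a field K. Then every submodule of a free A-module of finite rank is either semisimple or has a projective (free) direct summand; in particular, every finite-dimensional A-module of Loewy length 2 without projective direct summands does not embed into any finite-rank free A-module. -/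
set_option synthInstance.maxHeartbeats 1000000
set_option maxHeartbeats 1000000

open CategoryTheory

namespace St17

abbrev A (K : Type) [Field K] : Type :=
  MvPolynomial (Fin 2) K ⧸
    (Ideal.span {MvPolynomial.X 0 ^ 2, MvPolynomial.X 1 ^ 2,
      MvPolynomial.X 0 * MvPolynomial.X 1} : Ideal (MvPolynomial (Fin 2) K))

noncomputable def x (K : Type) [Field K] : A K :=
  Ideal.Quotient.mk _ (MvPolynomial.X 0)

noncomputable def y (K : Type) [Field K] : A K :=
  Ideal.Quotient.mk _ (MvPolynomial.X 1)

end St17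

/-!
Write `a ∈ A` as `c + n` with `c ∈ K` and `n ∈ m`; since `n² = 0`, `a` is a unit unless `c = 0`,
in which case `m` kills `a`. So either `m` kills a submodule `N ≤ Aⁿ`, or some `v ∈ N` has a unit
coordinate `vᵢ`; then `w ↦ wᵢ vᵢ⁻¹` is a functional on `N` sending `v` to `1`, which splits the free
summand `A v` off `N`. The second claim is the first one applied to the image of an embedding.
-/

section ProjectiveSummand

variable {R M N : Type*} [Ring R] [AddCommGroup M] [Module R M] [AddCommGroup N] [Module R N]

def HasNonzeroProjectiveSummand (R M : Type*) [Ring R] [AddCommGroup M] [Module R M] : Prop :=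
  ∃ P Q : Submodule R M, IsCompl P Q ∧ P ≠ ⊥ ∧ Module.Projective R P

theorem LinearMap.isCompl_range_ker_of_leftInverse {f : M →ₗ[R] N} {g : N →ₗ[R] M}
    (h : Function.LeftInverse g f) : IsCompl (LinearMap.range f) (LinearMap.ker g) := by
  let e := LinearEquiv.ofLeftInverse h
  rw [← LinearEquiv.ker_comp e g]
  exact LinearMap.isCompl_of_proj fun z => e.apply_symm_apply z

theorem HasNonzeroProjectiveSummand.of_linearEquiv (e : M ≃ₗ[R] N)
    (h : HasNonzeroProjectiveSummand R M) : HasNonzeroProjectiveSummand R N := by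
  obtain ⟨P, Q, hPQ, hP, hProj⟩ := h
  let o := Submodule.orderIsoMapComap e
  refine ⟨o P, o Q, o.isCompl hPQ, fun h => hP (o.injective (h.trans o.map_bot.symm)), ?_⟩
  exact Module.Projective.of_equiv (e.submoduleMap P)

theorem hasNonzeroProjectiveSummand_of_apply_eq_one [Nontrivial R] (φ : M →ₗ[R] R) {v : M}
    (hv : φ v = 1) : HasNonzeroProjectiveSummand R M := by
  let f := LinearMap.toSpanSingleton R M v
  have hφf : Function.LeftInverse φ f := fun r => by simp [f, hv]
  refine ⟨_, _, LinearMap.isCompl_range_ker_of_leftInverse hφf, fun h => ?_,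
    Module.Projective.of_equiv (LinearEquiv.ofLeftInverse hφf)⟩
  have : f 1 = 0 := by simpa [h] using LinearMap.mem_range_self f 1
  simpa [this] using hφf 1

theorem hasNonzeroProjectiveSummand_of_isUnit_apply [Nontrivial R] {ι : Type*}
    (N : Submodule R (ι → R)) {v : ι → R} (hv : v ∈ N) {i : ι} (hu : IsUnit (v i)) :
    HasNonzeroProjectiveSummand R N :=
  hasNonzeroProjectiveSummand_of_apply_eq_one
    (LinearMap.toSpanSingleton R R ↑hu.unit⁻¹ ∘ₗ LinearMap.proj i ∘ₗ N.subtype)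
    (v := ⟨v, hv⟩) (by simp)

end ProjectiveSummand

namespace St17

section SquareZero

variable (K : Type) [Field K]

theorem x_mul_x : x K * x K = 0 := by
  rw [x, ← map_mul, Ideal.Quotient.eq_zero_iff_mem, ← sq]
  exact Ideal.subset_span (by simp)

theorem y_mul_y : y K * y K = 0 := by
  rw [y, ← map_mul, Ideal.Quotient.eq_zero_iff_mem, ← sq]
  exact Ideal.subset_span (by simp)

theorem x_mul_y : x K * y K = 0 := by
  rw [x, y, ← map_mul, Ideal.Quotient.eq_zero_iff_mem]
  exact Ideal.subset_span (by simp)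

instance : Nontrivial (A K) := by
  have hker : (Ideal.span {MvPolynomial.X 0 ^ 2, MvPolynomial.X 1 ^ 2,
      MvPolynomial.X 0 * MvPolynomial.X 1} : Ideal (MvPolynomial (Fin 2) K)) ≤
      RingHom.ker (MvPolynomial.constantCoeff (σ := Fin 2) (R := K)) := by
    rw [Ideal.span_le]
    rintro p (rfl | rfl | rfl) <;> simp [RingHom.mem_ker]
  exact (Ideal.Quotient.lift _ _ hker).domain_nontrivial

theorem exists_eq_algebraMap_add_x_mul_add_y_mul (a : A K) :
    ∃ (c : K) (s t : A K), a = algebraMap K (A K) c + x K * s + y K * t := by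
  obtain ⟨p, rfl⟩ := Ideal.Quotient.mk_surjective a
  induction p using MvPolynomial.induction_on with
  | C c =>
    refine ⟨c, 0, 0, ?_⟩
    rw [← MvPolynomial.algebraMap_eq, Ideal.Quotient.mk_algebraMap]
    ring
  | add p q hp hq =>
    obtain ⟨c, s, t, hc⟩ := hp
    obtain ⟨c', s', t', hc'⟩ := hq
    exact ⟨c + c', s + s', t + t', by rw [map_add, hc, hc', map_add]; ring⟩
  | mul_X p i hp =>
    obtain ⟨c, s, t, hc⟩ := hp
    rw [map_mul, hc]
    fin_cases i
    · refine ⟨0, algebraMap K (A K) c, 0, ?_⟩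
      change _ * x K = _
      rw [map_zero]
      linear_combination s * x_mul_x K + t * x_mul_y K
    · refine ⟨0, 0, algebraMap K (A K) c, ?_⟩
      change _ * y K = _
      rw [map_zero]
      linear_combination s * x_mul_y K + t * y_mul_y K

theorem isUnit_or_x_mul_eq_zero_and_y_mul_eq_zero (a : A K) :
    IsUnit a ∨ (x K * a = 0 ∧ y K * a = 0) := by
  obtain ⟨c, s, t, rfl⟩ := exists_eq_algebraMap_add_x_mul_add_y_mul K a
  by_cases hc : c = 0
  · subst hc
    right
    rw [map_zero, zero_add]
    constructor
    · linear_combination s * x_mul_x K + t * x_mul_y K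
    · linear_combination s * x_mul_y K + t * y_mul_y K
  · left
    have hnil : IsNilpotent (x K * s + y K * t) := ⟨2, by
      linear_combination (s * s) * x_mul_x K + (2 * s * t) * x_mul_y K + (t * t) * y_mul_y K⟩
    rw [add_assoc]
    exact hnil.isUnit_add_left_of_commute ((isUnit_iff_ne_zero.mpr hc).map _) (Commute.all _ _)

theorem submodule_pi_semisimple_or_hasNonzeroProjectiveSummand {ι : Type*}
    (N : Submodule (A K) (ι → A K)) :
    (∀ v ∈ N, x K • v = 0 ∧ y K • v = 0) ∨ HasNonzeroProjectiveSummand (A K) N := by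
  by_cases hunit : ∃ v ∈ N, ∃ i, IsUnit (v i)
  · obtain ⟨v, hv, i, hu⟩ := hunit
    exact Or.inr (hasNonzeroProjectiveSummand_of_isUnit_apply N hv hu)
  · push Not at hunit
    refine Or.inl fun v hv => ?_
    have hv0 i := (isUnit_or_x_mul_eq_zero_and_y_mul_eq_zero K (v i)).resolve_left (hunit v hv i)
    exact ⟨funext fun i => (hv0 i).1, funext fun i => (hv0 i).2⟩

end SquareZero

theorem stmt17 (K : Type) [Field K] :
    (∀ (n : ℕ) (N : Submodule (A K) (Fin n → A K)),
      (∀ v ∈ N, x K • v = 0 ∧ y K • v = 0) ∨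
      (∃ P Q : Submodule (A K) N, IsCompl P Q ∧ P ≠ ⊥ ∧ Module.Projective (A K) P))
    ∧ (∀ (M : Type) [AddCommGroup M] [Module (A K) M], Module.Finite (A K) M →
        (∃ m : M, ¬(x K • m = 0 ∧ y K • m = 0)) →
        (¬∃ P Q : Submodule (A K) M, IsCompl P Q ∧ P ≠ ⊥ ∧ Module.Projective (A K) P) →
        ∀ (n : ℕ) (f : M →ₗ[A K] (Fin n → A K)), ¬Function.Injective f) := by
  refine ⟨fun n => submodule_pi_semisimple_or_hasNonzeroProjectiveSummand K, ?_⟩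
  intro M _ _ _ ⟨m, hm⟩ hnoSummand n f hf
  rcases submodule_pi_semisimple_or_hasNonzeroProjectiveSummand K (LinearMap.range f) with
    hss | hsummand
  · obtain ⟨hx, hy⟩ := hss (f m) (LinearMap.mem_range_self f m)
    exact hm ⟨hf (by rwa [map_smul, map_zero]), hf (by rwa [map_smul, map_zero])⟩
  · exact hnoSummand (hsummand.of_linearEquiv (LinearEquiv.ofInjective f hf).symm)

end St17
end
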